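/- Deciding whether a given symmetric map ε : X×X∖diag → P(M) is a symmetrized Fitch map is NP-complete. In particular, there is a polynomial-time many-one reduction from Quartet Compatibility to Symm-Fitch Recognition: given quartets q_1, ..., q_n on X, defining ε(x,y) := { i : q_i = ab|cd and {x,y} ∉ {{a,b},{c,d}} } yields a map ε that is a symmetrized Fitch map if and only if {q_1,...,q_n} is compatible. -/

import Mathlib

open SimpleGraph

/-- A phylogenetic (unrooted) tree with leaf set `X`: a finite connected acyclic
simple graph in which the leaves of `X` are injectively embedded as vertices of
degree at most one, and all other (inner) vertices have degree at least three. -/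
structure PhyloTree (X : Type) where
  V : Type
  [finV : Fintype V]
  T : SimpleGraph V
  conn : T.Connected
  acyc : T.IsAcyclic
  leaf : X → V
  leaf_inj : Function.Injective leaf
  leaf_deg : ∀ x : X, (T.neighborSet (leaf x)).ncard ≤ 1
  inner_deg : ∀ v : V, v ∉ Set.range leaf → 3 ≤ (T.neighborSet v).ncard

/-- `(t, lab)` explains `ε`: for distinct leaves `x,y`, a color `m` belongs to
`ε x y` iff the (unique) path from `x` to `y` in `t` contains an `m`-edge. -/
def Explains {X M : Type} (t : PhyloTree X) (lab : Sym2 t.V → Set M)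
    (ε : X → X → Set M) : Prop :=
  ∀ x y : X, x ≠ y → ∀ p : t.T.Walk (t.leaf x) (t.leaf y), p.IsPath →
    ∀ m : M, m ∈ ε x y ↔ ∃ e ∈ p.edges, m ∈ lab e

/-- `ε` is a symmetrized Fitch map: some edge-labeled tree explains it. -/
def IsSymFitch {X M : Type} (ε : X → X → Set M) : Prop :=
  ∃ t : PhyloTree X, ∃ lab : Sym2 t.V → Set M, Explains t lab ε

/-- The tree `t` displays the subsplit `A|B`: some edge of `t` separates the
leaves in `A` from the leaves in `B`. -/
def Displays {X : Type} (t : PhyloTree X) (A B : Set X) : Prop :=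
  ∃ u v : t.V, t.T.Adj u v ∧
    (∀ x ∈ A, (t.T.deleteEdges {s(u,v)}).Reachable (t.leaf x) u) ∧
    (∀ x ∈ B, (t.T.deleteEdges {s(u,v)}).Reachable (t.leaf x) v)

/-- The complementary neighborhood `N_m[y]` of `y` w.r.t. color `m`. -/
def Nbr {X M : Type} (ε : X → X → Set M) (m : M) (y : X) : Set X :=
  {x | x = y ∨ m ∉ ε x y}

/-!
If a tree with labeling explains `ε`, then for a quartet `ab|cd` the color `i` lies on the
`a`–`c` path but on neither the `a`–`b` nor the `c`–`d` path; cutting an `i`-edge of the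
`a`–`c` path separates `{a, b}` from `{c, d}`. Conversely, if a tree displays all quartets,
label each edge with the quartets whose two pair-paths both avoid it. The displayed edge of
`ab|cd` is a bridge with the `a`–`b` path on one side and the `c`–`d` path on the other, so a
leaf-to-leaf path covered by these two paths lies on one of them, and since leaves have
degree at most one, its ends are the ends of that path.
-/

theorem Set.pair_eq_pair_of_ne {α : Type*} {x y a b : α} (hxy : x ≠ y) (hx : x = a ∨ x = b)
    (hy : y = a ∨ y = b) : ({x, y} : Set α) = {a, b} := by
  rcases hx with rfl | rfl <;> rcases hy with rfl | rfl <;> simp_all [Set.pair_comm]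

namespace SimpleGraph

variable {V : Type*} {G : SimpleGraph V}

theorem Walk.IsPath.one_lt_ncard_neighborSet [Finite V] {u v z : V} {p : G.Walk u v}
    (hp : p.IsPath) (hz : z ∈ p.support) (hzu : z ≠ u) (hzv : z ≠ v) :
    1 < (G.neighborSet z).ncard := by
  obtain ⟨q, r, -, -, rfl⟩ := hp.mem_support_iff_exists_append.mp hz
  have hq : ¬q.Nil := fun h => hzu h.eq.symm
  have hr : ¬r.Nil := fun h => hzv h.eq
  refine (Set.one_lt_ncard_iff).mpr ⟨q.penultimate, r.snd, (q.adj_penultimate hq).symm,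
    r.adj_snd hr, fun h => ?_⟩
  have hpen : q.penultimate ∈ q.support := q.getVert_mem_support _
  have hsnd : r.snd ∈ r.tail.support := by
    rw [r.support_tail_of_not_nil hr]
    exact r.snd_mem_tail_support hr
  exact List.disjoint_left.mp (hp.disjoint_support_of_append hr) hpen (h.symm ▸ hsnd)

theorem Walk.exists_reachable_deleteEdges_of_mem_edges {u v : V} {e : Sym2 V} (p : G.Walk u v)
    (hp : p.edges.Nodup) (he : e ∈ p.edges) :
    ∃ x y, e = s(x, y) ∧ (G.deleteEdges {e}).Reachable u x ∧
      (G.deleteEdges {e}).Reachable y v := by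
  induction p with
  | nil => simp at he
  | @cons a b _ hab q ih =>
    rw [edges_cons, List.nodup_cons] at hp
    rw [edges_cons, List.mem_cons] at he
    rcases he with rfl | he
    · exact ⟨a, b, rfl, .rfl, (q.toDeleteEdge _ hp.1).reachable⟩
    · obtain ⟨x, y, rfl, hbx, hyv⟩ := ih hp.2 he
      have hab' : (G.deleteEdges {s(x, y)}).Adj a b :=
        (deleteEdges_adj ..).mpr ⟨hab, fun h => hp.1 (Set.mem_singleton_iff.mp h ▸ he)⟩
      exact ⟨x, y, rfl, hab'.reachable.trans hbx, hyv⟩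

theorem IsAcyclic.notMem_edges_of_reachable_deleteEdges (hG : G.IsAcyclic) {u v : V}
    {e : Sym2 V} {p : G.Walk u v} (hp : p.IsPath) (h : (G.deleteEdges {e}).Reachable u v) :
    e ∉ p.edges := by
  classical
  obtain ⟨q⟩ := h
  have hqp : q.bypass.mapLe (deleteEdges_le _) = p := congrArg Subtype.val <|
    (hG.subsingleton_path u v).elim ⟨_, q.bypass_isPath.mapLe _⟩ ⟨p, hp⟩
  rw [← hqp, Walk.edges_mapLe_eq_edges]
  intro he
  simpa using q.bypass.edges_subset_edgeSet he

theorem IsAcyclic.reachable_deleteEdges_of_mem_support (hG : G.IsAcyclic) {u v z : V}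
    {e : Sym2 V} {p : G.Walk u v} (hp : p.IsPath) (h : (G.deleteEdges {e}).Reachable u v)
    (hz : z ∈ p.support) : (G.deleteEdges {e}).Reachable u z := by
  let p' := p.toDeleteEdge e (hG.notMem_edges_of_reachable_deleteEdges hp h)
  obtain ⟨r, -, -⟩ := Walk.mem_support_iff_exists_append.mp
    (show z ∈ p'.support by rwa [Walk.support_transfer])
  exact r.reachable

end SimpleGraph

namespace PhyloTree

variable {X : Type} (t : PhyloTree X)

noncomputable def path (u v : t.V) : t.T.Walk u v :=
  (t.conn.preconnected.exists_isPath u v).choose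

theorem isPath_path (u v : t.V) : (t.path u v).IsPath :=
  (t.conn.preconnected.exists_isPath u v).choose_spec

noncomputable abbrev leafPath (x y : X) : t.T.Walk (t.leaf x) (t.leaf y) :=
  t.path (t.leaf x) (t.leaf y)

variable {t}

theorem eq_path {u v : t.V} {p : t.T.Walk u v} (hp : p.IsPath) : p = t.path u v :=
  congrArg Subtype.val <| (t.acyc.subsingleton_path u v).elim ⟨p, hp⟩ ⟨_, t.isPath_path u v⟩

theorem mem_edges_path_comm {u v : t.V} {e : Sym2 t.V} :
    e ∈ (t.path u v).edges ↔ e ∈ (t.path v u).edges := by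
  rw [← eq_path (t.isPath_path v u).reverse, Walk.edges_reverse, List.mem_reverse]

theorem eq_or_eq_of_leaf_mem_support {a b x : X} {p : t.T.Walk (t.leaf a) (t.leaf b)}
    (hp : p.IsPath) (hx : t.leaf x ∈ p.support) : x = a ∨ x = b := by
  have := t.finV
  by_contra! h
  have := hp.one_lt_ncard_neighborSet hx (t.leaf_inj.ne h.1) (t.leaf_inj.ne h.2)
  have := t.leaf_deg x
  omega

theorem displays_of_mem_edges_leafPath {a b c d : X} {e : Sym2 t.V}
    (hac : e ∈ (t.leafPath a c).edges) (hab : e ∉ (t.leafPath a b).edges)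
    (hcd : e ∉ (t.leafPath c d).edges) : Displays t {a, b} {c, d} := by
  obtain ⟨u, v, rfl, hau, hvc⟩ := (t.leafPath a c).exists_reachable_deleteEdges_of_mem_edges
    (t.isPath_path _ _).isTrail.edges_nodup hac
  have hba := ((t.leafPath a b).toDeleteEdge _ hab).reachable.symm
  have hdc := ((t.leafPath c d).toDeleteEdge _ hcd).reachable.symm
  refine ⟨u, v, (t.leafPath a c).adj_of_mem_edges hac, ?_, ?_⟩
  · rintro x (rfl | rfl)
    exacts [hau, hba.trans hau]
  · rintro x (rfl | rfl)
    exacts [hvc.symm, hdc.trans hvc.symm]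

theorem mem_edges_leafPath_of_pair_eq {a b x y : X} {e : Sym2 t.V}
    (h : ({x, y} : Set X) = {a, b}) (he : e ∈ (t.leafPath x y).edges) :
    e ∈ (t.leafPath a b).edges := by
  rcases Set.pair_eq_pair_iff.mp h with ⟨rfl, rfl⟩ | ⟨rfl, rfl⟩
  exacts [he, mem_edges_path_comm.mp he]

theorem pair_eq_of_edges_leafPath_subset {a b c d x y : X} (hdisp : Displays t {a, b} {c, d})
    (hxy : x ≠ y)
    (h : ∀ e ∈ (t.leafPath x y).edges,
      e ∈ (t.leafPath a b).edges ∨ e ∈ (t.leafPath c d).edges) :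
    ({x, y} : Set X) = {a, b} ∨ ({x, y} : Set X) = {c, d} := by
  obtain ⟨u, v, huv, hA, hB⟩ := hdisp
  have hbridge : ¬(t.T.deleteEdges {s(u, v)}).Reachable u v :=
    isAcyclic_iff_forall_adj_isBridge.mp t.acyc huv
  have hab := (hA a (by simp)).trans (hA b (by simp)).symm
  have hcd := (hB c (by simp)).trans (hB d (by simp)).symm
  have hsideAB : ∀ z ∈ (t.leafPath a b).support, (t.T.deleteEdges {s(u, v)}).Reachable z u :=
    fun z hz => (t.acyc.reachable_deleteEdges_of_mem_support (t.isPath_path _ _) hab hz).symm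
      |>.trans (hA a (by simp))
  have hsideCD : ∀ z ∈ (t.leafPath c d).support, (t.T.deleteEdges {s(u, v)}).Reachable z v :=
    fun z hz => (t.acyc.reachable_deleteEdges_of_mem_support (t.isPath_path _ _) hcd hz).symm
      |>.trans (hB c (by simp))
  have hreach : (t.T.deleteEdges {s(u, v)}).Reachable (t.leaf x) (t.leaf y) :=
    ((t.leafPath x y).toDeleteEdge _ fun he => (h _ he).elim
      (t.acyc.notMem_edges_of_reachable_deleteEdges (t.isPath_path _ _) hab)
      (t.acyc.notMem_edges_of_reachable_deleteEdges (t.isPath_path _ _) hcd)).reachable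
  have hnil : ¬(t.leafPath x y).Nil := fun hn => hxy (t.leaf_inj hn.eq)
  have hx := (h _ (Walk.mk_start_snd_mem_edges hnil)).imp
    (Walk.fst_mem_support_of_mem_edges _) (Walk.fst_mem_support_of_mem_edges _)
  have hy := (h _ (Walk.mk_penultimate_end_mem_edges hnil)).imp
    (Walk.snd_mem_support_of_mem_edges _) (Walk.snd_mem_support_of_mem_edges _)
  rcases hx with hx | hx <;> rcases hy with hy | hy
  · exact .inl <| Set.pair_eq_pair_of_ne hxy
      (eq_or_eq_of_leaf_mem_support (t.isPath_path _ _) hx)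
      (eq_or_eq_of_leaf_mem_support (t.isPath_path _ _) hy)
  · exact absurd (((hsideAB _ hx).symm.trans hreach).trans (hsideCD _ hy)) hbridge
  · exact absurd (((hsideAB _ hy).symm.trans hreach.symm).trans (hsideCD _ hx)) hbridge
  · exact .inr <| Set.pair_eq_pair_of_ne hxy
      (eq_or_eq_of_leaf_mem_support (t.isPath_path _ _) hx)
      (eq_or_eq_of_leaf_mem_support (t.isPath_path _ _) hy)

theorem exists_edge_leafPath_iff {a b c d x y : X} (hdisp : Displays t {a, b} {c, d})
    (hxy : x ≠ y) :
    (∃ e ∈ (t.leafPath x y).edges,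
      e ∉ (t.leafPath a b).edges ∧ e ∉ (t.leafPath c d).edges) ↔
      ¬(({x, y} : Set X) = {a, b} ∨ ({x, y} : Set X) = {c, d}) := by
  constructor
  · rintro ⟨e, he, hab, hcd⟩ (h | h)
    exacts [hab (mem_edges_leafPath_of_pair_eq h he), hcd (mem_edges_leafPath_of_pair_eq h he)]
  · intro h
    by_contra! h'
    exact h <| pair_eq_of_edges_leafPath_subset hdisp hxy
      fun e he => or_iff_not_imp_left.mpr (h' e he)

end PhyloTree

theorem Explains.displays {X M : Type} {t : PhyloTree X} {lab : Sym2 t.V → Set M}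
    {ε : X → X → Set M} (h : Explains t lab ε) {a b c d : X} {m : M}
    (hab : a ≠ b) (hcd : c ≠ d) (hac : a ≠ c)
    (hmab : m ∉ ε a b) (hmcd : m ∉ ε c d) (hmac : m ∈ ε a c) :
    Displays t {a, b} {c, d} := by
  obtain ⟨e, he, hme⟩ := (h a c hac _ (t.isPath_path _ _) m).mp hmac
  exact t.displays_of_mem_edges_leafPath he
    (fun he' => hmab ((h a b hab _ (t.isPath_path _ _) m).mpr ⟨e, he', hme⟩))
    (fun he' => hmcd ((h c d hcd _ (t.isPath_path _ _) m).mpr ⟨e, he', hme⟩))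

theorem fitch_recognition_reduction_general {X : Type} (n : ℕ)
    (q : Fin n → (X × X) × (X × X))
    (hq : ∀ i, [(q i).1.1, (q i).1.2, (q i).2.1, (q i).2.2].Pairwise Ne) :
    IsSymFitch (fun x y : X =>
        {i : Fin n | ¬ (({x, y} : Set X) = {(q i).1.1, (q i).1.2} ∨
          ({x, y} : Set X) = {(q i).2.1, (q i).2.2})}) ↔
      ∃ t : PhyloTree X, ∀ i : Fin n,
        Displays t {(q i).1.1, (q i).1.2} {(q i).2.1, (q i).2.2} := by
  constructor
  · rintro ⟨t, lab, hex⟩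
    refine ⟨t, fun i => ?_⟩
    obtain ⟨⟨hab, hac, had⟩, ⟨hbc, -⟩, hcd⟩ : _ ∧ _ ∧ _ := by simpa using hq i
    exact hex.displays (m := i) hab hcd hac (by simp) (by simp)
      (by simp [Set.pair_eq_pair_iff, hab, hac, had, Ne.symm hbc])
  · rintro ⟨t, ht⟩
    refine ⟨t, fun e => {j | e ∉ (t.leafPath (q j).1.1 (q j).1.2).edges ∧
      e ∉ (t.leafPath (q j).2.1 (q j).2.2).edges}, fun x y hxy p hp i => ?_⟩
    rw [PhyloTree.eq_path hp]
    exact (t.exists_edge_leafPath_iff (ht i) hxy).symm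

/-- Correctness of the reduction from Quartet Compatibility to symmetrized
Fitch map recognition (whence the latter is NP-hard): given quartets
`q i = a_i b_i | c_i d_i` on `X`, the map
`ε(x,y) = { i : {x,y} ∉ {{a_i,b_i},{c_i,d_i}} }` is a symmetrized Fitch map iff
the set of quartets is compatible. -/
theorem fitch_recognition_reduction {X : Type} [Fintype X] (n : ℕ)
    (q : Fin n → (X × X) × (X × X))
    (hq : ∀ i, [(q i).1.1, (q i).1.2, (q i).2.1, (q i).2.2].Pairwise Ne) :
    IsSymFitch (fun x y : X =>
        {i : Fin n | ¬ (({x, y} : Set X) = {(q i).1.1, (q i).1.2} ∨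
          ({x, y} : Set X) = {(q i).2.1, (q i).2.2})}) ↔
      ∃ t : PhyloTree X, ∀ i : Fin n,
        Displays t {(q i).1.1, (q i).1.2} {(q i).2.1, (q i).2.2} :=
  fitch_recognition_reduction_general n q hq
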